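/- Let V be a multiplicative partial isometry on H⊗H. Under the pairing ⟨λ(ω), ρ(ω')⟩ := (ω⊗ω')(V), the map Δ(X) = V(X⊗1)V* restricted to the right leg A is the transpose of the multiplication on the left leg Â: ⟨λ(ω), ρ(ω')ρ(ω'')⟩ = ⟨Δ(λ(ω)), ρ(ω')⊗ρ(ω'')⟩ for all ω, ω', ω'' ∈ L(H)*. In particular Δ is coassociative on A. -/

import Mathlib

open Matrix

namespace MPIpaper

variable {n : Type*} [Fintype n] [DecidableEq n]

noncomputable section

/-- `W₁₂ = W ⊗ 1` on `H ⊗ H ⊗ H`. -/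
def leg12 (V : Matrix (n × n) (n × n) ℂ) : Matrix (n × n × n) (n × n × n) ℂ :=
  Matrix.of fun p q => V (p.1, p.2.1) (q.1, q.2.1) * (if p.2.2 = q.2.2 then (1 : ℂ) else 0)

/-- `W₂₃ = 1 ⊗ W` on `H ⊗ H ⊗ H`. -/
def leg23 (V : Matrix (n × n) (n × n) ℂ) : Matrix (n × n × n) (n × n × n) ℂ :=
  Matrix.of fun p q => (if p.1 = q.1 then (1 : ℂ) else 0) * V p.2 q.2

/-- `W₁₃ = (1⊗Σ)(W⊗1)(1⊗Σ)` on `H ⊗ H ⊗ H`. -/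
def leg13 (V : Matrix (n × n) (n × n) ℂ) : Matrix (n × n × n) (n × n × n) ℂ :=
  Matrix.of fun p q => V (p.1, p.2.2) (q.1, q.2.2) * (if p.2.1 = q.2.1 then (1 : ℂ) else 0)

/-- A multiplicative partial isometry: `VV*V = V`, the pentagon equation, and the
three auxiliary (hexagon-type) equations. -/
def IsMPI (V : Matrix (n × n) (n × n) ℂ) : Prop :=
  V * Vᴴ * V = V ∧
  leg23 V * leg12 V = leg12 V * leg13 V * leg23 V ∧
  leg13 V * leg23 V * (leg23 V)ᴴ = (leg12 V)ᴴ * leg12 V * leg13 V ∧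
  leg12 V * (leg12 V)ᴴ * leg23 V = leg23 V * leg12 V * (leg12 V)ᴴ ∧
  leg12 V * (leg23 V)ᴴ * leg23 V = (leg23 V)ᴴ * leg23 V * leg12 V

/-- `λ(ω) = (ω ⊗ id)(V)`. -/
def lam (ω : Matrix n n ℂ →ₗ[ℂ] ℂ) (V : Matrix (n × n) (n × n) ℂ) : Matrix n n ℂ :=
  Matrix.of fun i j => ω (Matrix.of fun a b => V (a, i) (b, j))

/-- `ρ(ω) = (id ⊗ ω)(V)`. -/
def rho (ω : Matrix n n ℂ →ₗ[ℂ] ℂ) (V : Matrix (n × n) (n × n) ℂ) : Matrix n n ℂ :=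
  Matrix.of fun i j => ω (Matrix.of fun a b => V (i, a) (j, b))

/-- `1 ⊗ X` on `H ⊗ H`. -/
def oneTensor (X : Matrix n n ℂ) : Matrix (n × n) (n × n) ℂ :=
  Matrix.of fun p q => (if p.1 = q.1 then (1 : ℂ) else 0) * X p.2 q.2

/-- `X ⊗ 1` on `H ⊗ H`. -/
def tensorOne (X : Matrix n n ℂ) : Matrix (n × n) (n × n) ℂ :=
  Matrix.of fun p q => X p.1 q.1 * (if p.2 = q.2 then (1 : ℂ) else 0)

/-- `Δ(X) = V (X ⊗ 1) V*`. -/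
def Delta (V : Matrix (n × n) (n × n) ℂ) (X : Matrix n n ℂ) : Matrix (n × n) (n × n) ℂ :=
  V * tensorOne X * Vᴴ

/-- `Δ̂(X) = V* (1 ⊗ X) V`. -/
def hatDelta (V : Matrix (n × n) (n × n) ℂ) (X : Matrix n n ℂ) : Matrix (n × n) (n × n) ℂ :=
  Vᴴ * oneTensor X * V

/-- `(ω ⊗ ω')(W)` for an operator `W` on `H ⊗ H`. -/
def applyBoth (ω ω' : Matrix n n ℂ →ₗ[ℂ] ℂ) (W : Matrix (n × n) (n × n) ℂ) : ℂ :=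
  ω (Matrix.of fun i j => ω' (Matrix.of fun k l => W (i, k) (j, l)))

end

open scoped Kronecker

/-! The axioms give the key identity `V₂₃ V₁₂ V₂₃* = V₁₂ V₁₃`. Slice maps `ω ⊗ id` are
bimodule maps over `1 ⊗ L(H)` and send `V₁₂` to `λ(ω) ⊗ 1`, so slicing the first leg of
the left side gives `Δ(λ(ω))`; slicing the last two legs of the right side with `ω' ⊗ ω''`
gives `ρ(ω') ρ(ω'')`. Applying the remaining functionals in either order gives the duality.
For coassociativity, conjugate `X ⊗ 1 ⊗ 1` by both sides of the key identity: it commutes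
with `V₂₃`, and the last axiom moves `V₂₃* V₂₃` past `V₁₂*`, where `V₂₃*` absorbs it. -/

section Slice

variable {R : Type*} [CommSemiring R] {m k : Type*}

theorem map_of_sum_mul {ι : Type*} (ω : Matrix m m R →ₗ[R] R) (s : Finset ι)
    (c : ι → R) (f : ι → m → m → R) :
    ω (of fun a b => ∑ i ∈ s, c i * f i a b) = ∑ i ∈ s, c i * ω (of (f i)) := by
  have : (of fun a b => ∑ i ∈ s, c i * f i a b) = ∑ i ∈ s, c i • of (f i) := by
    ext a b; simp [Matrix.sum_apply]
  rw [this, map_sum]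
  simp only [map_smul, smul_eq_mul]

theorem map_eq_sum_mul_single [Fintype m] [DecidableEq m] (ω : Matrix m m R →ₗ[R] R)
    (X : Matrix m m R) : ω X = ∑ p : m × m, X p.1 p.2 * ω (single p.1 p.2 1) := by
  conv_lhs => rw [matrix_eq_sum_single X]
  simp only [map_sum, Fintype.sum_prod_type]
  refine Finset.sum_congr rfl fun i _ => Finset.sum_congr rfl fun j _ => ?_
  rw [← smul_eq_mul, ← map_smul, smul_single, smul_eq_mul, mul_one]

/-- `(ω ⊗ id)(X)`. -/
def sliceLeft (ω : Matrix m m R →ₗ[R] R) (X : Matrix (m × k) (m × k) R) : Matrix k k R :=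
  of fun i j => ω (of fun a b => X (a, i) (b, j))

/-- `(id ⊗ ω)(X)`. -/
def sliceRight (ω : Matrix m m R →ₗ[R] R) :
    Matrix (k × m) (k × m) R →ₗ[R] Matrix k k R where
  toFun X := of fun i j => ω (of fun a b => X (i, a) (j, b))
  map_add' X Y := by ext i j; exact map_add ω _ _
  map_smul' c X := by ext i j; exact map_smul ω c _

theorem map_sliceRight [Fintype m] (ω : Matrix m m R →ₗ[R] R) (φ : Matrix k k R →ₗ[R] R)
    (X : Matrix (m × k) (m × k) R) : ω (sliceRight φ X) = φ (sliceLeft ω X) := by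
  classical
  have : sliceLeft ω X =
      of fun a b => ∑ p : m × m, ω (single p.1 p.2 1) * X (p.1, a) (p.2, b) := by
    ext a b
    rw [sliceLeft, of_apply, map_eq_sum_mul_single ω]
    exact Finset.sum_congr rfl fun p _ => mul_comm _ _
  rw [this, map_of_sum_mul, map_eq_sum_mul_single ω]
  exact Finset.sum_congr rfl fun p _ => mul_comm _ _

variable [Fintype m] [DecidableEq m] [Fintype k]

theorem sliceLeft_one_kronecker_mul (ω : Matrix m m R →ₗ[R] R) (B : Matrix k k R)
    (X : Matrix (m × k) (m × k) R) : sliceLeft ω ((1 ⊗ₖ B) * X) = B * sliceLeft ω X := by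
  ext i j
  have : ∀ a b,
      (((1 : Matrix m m R) ⊗ₖ B) * X) (a, i) (b, j) = ∑ l, B i l * X (a, l) (b, j) := by
    intro a b
    simp [mul_apply, Fintype.sum_prod_type, one_apply, ite_mul]
  simp only [sliceLeft, of_apply, this, map_of_sum_mul]
  rfl

theorem sliceLeft_mul_one_kronecker (ω : Matrix m m R →ₗ[R] R) (C : Matrix k k R)
    (X : Matrix (m × k) (m × k) R) : sliceLeft ω (X * (1 ⊗ₖ C)) = sliceLeft ω X * C := by
  ext i j
  have : ∀ a b,
      (X * ((1 : Matrix m m R) ⊗ₖ C)) (a, i) (b, j) = ∑ l, C l j * X (a, i) (b, l) := by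
    intro a b
    simp [mul_apply, Fintype.sum_prod_type, one_apply, mul_comm]
  simp only [sliceLeft, of_apply, this, map_of_sum_mul]
  rw [mul_apply]
  exact Finset.sum_congr rfl fun l _ => mul_comm _ _

end Slice

section Legs

variable {m : Type*} [DecidableEq m]

theorem leg12_eq_submatrix (A : Matrix (m × m) (m × m) ℂ) :
    leg12 A = (A ⊗ₖ 1).submatrix (Equiv.prodAssoc m m m).symm (Equiv.prodAssoc m m m).symm := by
  ext ⟨i, a, c⟩ ⟨j, b, d⟩
  simp [leg12, one_apply]

theorem leg13_eq_submatrix (A : Matrix (m × m) (m × m) ℂ) :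
    leg13 A = (leg12 A).submatrix ((Equiv.refl m).prodCongr (Equiv.prodComm m m))
      ((Equiv.refl m).prodCongr (Equiv.prodComm m m)) :=
  rfl

theorem leg23_eq_one_kronecker (A : Matrix (m × m) (m × m) ℂ) : leg23 A = 1 ⊗ₖ A := by
  ext ⟨i, p⟩ ⟨j, q⟩
  simp [leg23, one_apply]

theorem leg12_mul [Fintype m] (A B : Matrix (m × m) (m × m) ℂ) :
    leg12 (A * B) = leg12 A * leg12 B := by
  simp only [leg12_eq_submatrix, submatrix_mul_equiv, ← mul_kronecker_mul, one_mul]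

theorem leg13_mul [Fintype m] (A B : Matrix (m × m) (m × m) ℂ) :
    leg13 (A * B) = leg13 A * leg13 B := by
  simp only [leg13_eq_submatrix, submatrix_mul_equiv, leg12_mul]

theorem leg23_mul [Fintype m] (A B : Matrix (m × m) (m × m) ℂ) :
    leg23 (A * B) = leg23 A * leg23 B := by
  simp only [leg23_eq_one_kronecker, ← mul_kronecker_mul, one_mul]

theorem leg12_conjTranspose (A : Matrix (m × m) (m × m) ℂ) : leg12 Aᴴ = (leg12 A)ᴴ := by
  simp only [leg12_eq_submatrix, conjTranspose_submatrix, conjTranspose_kronecker,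
    conjTranspose_one]

theorem leg13_conjTranspose (A : Matrix (m × m) (m × m) ℂ) : leg13 Aᴴ = (leg13 A)ᴴ := by
  simp only [leg13_eq_submatrix, conjTranspose_submatrix, leg12_conjTranspose]

theorem leg23_conjTranspose (A : Matrix (m × m) (m × m) ℂ) : leg23 Aᴴ = (leg23 A)ᴴ := by
  simp only [leg23_eq_one_kronecker, conjTranspose_kronecker, conjTranspose_one]

theorem leg12_tensorOne (X : Matrix m m ℂ) : leg12 (tensorOne X) = X ⊗ₖ 1 := by
  ext ⟨i, a, c⟩ ⟨j, b, d⟩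
  simp only [leg12, tensorOne, kronecker_apply, one_apply, of_apply, Prod.ext_iff]
  split_ifs <;> simp_all

theorem leg13_tensorOne (X : Matrix m m ℂ) : leg13 (tensorOne X) = X ⊗ₖ 1 := by
  ext ⟨i, a, c⟩ ⟨j, b, d⟩
  simp [leg13, tensorOne, one_apply, Prod.ext_iff, ite_and]

theorem sliceLeft_leg12 (ω : Matrix m m ℂ →ₗ[ℂ] ℂ) (A : Matrix (m × m) (m × m) ℂ) :
    sliceLeft ω (leg12 A) = tensorOne (lam ω A) := by
  ext ⟨a, c⟩ ⟨b, d⟩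
  by_cases h : c = d
  · simp [sliceLeft, leg12, tensorOne, lam, h]
  · simp only [sliceLeft, leg12, tensorOne, of_apply, h, if_false, mul_zero]
    exact map_zero ω

theorem leg12_mul_leg13_apply [Fintype m] (A : Matrix (m × m) (m × m) ℂ) (i j a b c d : m) :
    (leg12 A * leg13 A) (i, a, c) (j, b, d) = ∑ k, A (i, a) (k, b) * A (k, c) (j, d) := by
  simp [leg12, leg13, mul_apply, Fintype.sum_prod_type, mul_ite, ite_mul]

end Legs

section MPI

variable {m : Type*} [Fintype m] [DecidableEq m]

theorem rho_mul_rho (V : Matrix (m × m) (m × m) ℂ) (ω' ω'' : Matrix m m ℂ →ₗ[ℂ] ℂ) :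
    rho ω' V * rho ω'' V = sliceRight (ω'.comp (sliceRight ω'')) (leg12 V * leg13 V) := by
  ext i j
  simp only [sliceRight, LinearMap.coe_mk, AddHom.coe_mk, LinearMap.comp_apply, of_apply,
    leg12_mul_leg13_apply, map_of_sum_mul]
  simp only [mul_comm (V (i, _) _), map_of_sum_mul, mul_apply]
  exact Finset.sum_congr rfl fun k _ => mul_comm _ _

theorem IsMPI.leg23_mul_leg12_mul_conjTranspose_leg23 {V : Matrix (m × m) (m × m) ℂ}
    (hV : IsMPI V) : leg23 V * leg12 V * (leg23 V)ᴴ = leg12 V * leg13 V := by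
  obtain ⟨hpi, hpent, hhex₁, -, -⟩ := hV
  have hpi12 : leg12 V * (leg12 V)ᴴ * leg12 V = leg12 V := by
    rw [← leg12_conjTranspose, ← leg12_mul, ← leg12_mul, hpi]
  calc leg23 V * leg12 V * (leg23 V)ᴴ
      = leg12 V * (leg13 V * leg23 V * (leg23 V)ᴴ) := by rw [hpent]; simp only [mul_assoc]
    _ = leg12 V * (leg12 V)ᴴ * leg12 V * leg13 V := by rw [hhex₁]; simp only [mul_assoc]
    _ = leg12 V * leg13 V := by rw [hpi12]

theorem IsMPI.Delta_lam {V : Matrix (m × m) (m × m) ℂ} (hV : IsMPI V)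
    (ω : Matrix m m ℂ →ₗ[ℂ] ℂ) : Delta V (lam ω V) = sliceLeft ω (leg12 V * leg13 V) := by
  rw [← hV.leg23_mul_leg12_mul_conjTranspose_leg23, ← leg23_conjTranspose,
    leg23_eq_one_kronecker, leg23_eq_one_kronecker, sliceLeft_mul_one_kronecker,
    sliceLeft_one_kronecker_mul, sliceLeft_leg12]
  rfl

theorem IsMPI.Delta_coassoc {V : Matrix (m × m) (m × m) ℂ} (hV : IsMPI V)
    (X : Matrix m m ℂ) :
    leg12 V * leg13 (Delta V X) * (leg12 V)ᴴ = leg23 V * leg12 (Delta V X) * (leg23 V)ᴴ := by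
  have hkey := hV.leg23_mul_leg12_mul_conjTranspose_leg23
  obtain ⟨hpi, -, -, -, hhex₃⟩ := hV
  have hkey' : (leg13 V)ᴴ * (leg12 V)ᴴ = leg23 V * (leg12 V)ᴴ * (leg23 V)ᴴ := by
    simpa only [conjTranspose_mul, conjTranspose_conjTranspose, mul_assoc]
      using (congrArg conjTranspose hkey).symm
  have hcomm : (leg23 V)ᴴ * (X ⊗ₖ 1) = (X ⊗ₖ 1) * (leg23 V)ᴴ := by
    rw [← leg23_conjTranspose, leg23_eq_one_kronecker, ← mul_kronecker_mul,
      ← mul_kronecker_mul, one_mul, mul_one, mul_one, one_mul]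
  have hhex₃' : (leg23 V)ᴴ * leg23 V * (leg12 V)ᴴ = (leg12 V)ᴴ * (leg23 V)ᴴ * leg23 V := by
    simpa only [conjTranspose_mul, conjTranspose_conjTranspose, mul_assoc]
      using congrArg conjTranspose hhex₃
  have hpi23 : (leg23 V)ᴴ * leg23 V * (leg23 V)ᴴ = (leg23 V)ᴴ := by
    have hpi' := congrArg conjTranspose hpi
    simp only [conjTranspose_mul, conjTranspose_conjTranspose, ← mul_assoc] at hpi'
    rw [← leg23_conjTranspose, ← leg23_mul, ← leg23_mul, hpi']
  simp only [Delta, leg12_mul, leg13_mul, leg12_tensorOne, leg13_tensorOne, leg12_conjTranspose,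
    leg13_conjTranspose]
  set P := leg12 V
  set Q := leg13 V
  set R := leg23 V
  set Y := X ⊗ₖ (1 : Matrix (m × m) (m × m) ℂ)
  calc P * (Q * Y * Qᴴ) * Pᴴ
      = P * Q * Y * (Qᴴ * Pᴴ) := by simp only [mul_assoc]
    _ = R * P * (Rᴴ * Y) * R * Pᴴ * Rᴴ := by rw [← hkey, hkey']; simp only [mul_assoc]
    _ = R * P * Y * (Rᴴ * R * Pᴴ) * Rᴴ := by rw [hcomm]; simp only [mul_assoc]
    _ = R * P * Y * Pᴴ * (Rᴴ * R * Rᴴ) := by rw [hhex₃']; simp only [mul_assoc]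
    _ = R * (P * Y * Pᴴ) * Rᴴ := by rw [hpi23]; simp only [mul_assoc]

end MPI

theorem statement11 (V : Matrix (n × n) (n × n) ℂ) (hV : IsMPI V)
    (ω ω' ω'' : Matrix n n ℂ →ₗ[ℂ] ℂ) :
    ω (rho ω' V * rho ω'' V) = applyBoth ω' ω'' (Delta V (lam ω V)) ∧
    leg12 V * leg13 (Delta V (lam ω V)) * (leg12 V)ᴴ =
      leg23 V * leg12 (Delta V (lam ω V)) * (leg23 V)ᴴ := by
  refine ⟨?_, hV.Delta_coassoc _⟩
  rw [rho_mul_rho, map_sliceRight, ← hV.Delta_lam]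
  rfl

end MPIpaper
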